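/- arXiv:1012.2811 — 2 statements merged into one kernel-verified Lean document; each statement's English description precedes it below -/
import Mathlib

section
/- Let $L$ be a linear subspace of $L_\infty(\Omega, \mathcal{A}, P_0)$. If there exists a finitely additive probability $P$ with $P \sim P_0$ and $E_P(X) = 0$ for all $X \in L$, then $\overline{L - L_\infty^+} \cap L_\infty^+ = \{0\}$, where the closure is taken in the norm topology of $L_\infty$. -/
/-!
The finitely additive expectation `E_P` is monotone and commutes with adding constants on
bounded random variables, and because `P ≪ P₀` it only sees the `P₀`-class of a variable;
together these make `E_P` a `1`-Lipschitz functional on `L∞`. It vanishes on `L`, so it is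
`≤ 0` on `L - L∞⁺` and, by continuity, on the closure. On the other hand `P₀ ≪ P`, so a
nonnegative `X ≠ 0` has `P(X > ε) > 0` for some `ε > 0`, whence `E_P X ≥ ε P(X > ε) > 0`.
-/

open MeasureTheory Set

namespace FAP

variable {Ω : Type*}

/-- A finitely additive probability on the power set of `Ω`. -/
def IsFAP (P : Set Ω → ℝ) : Prop :=
  P univ = 1 ∧ (∀ A : Set Ω, 0 ≤ P A) ∧
    ∀ A B : Set Ω, Disjoint A B → P (A ∪ B) = P A + P B

/-- A finitely additive probability on the σ-field of a measurable space `Ω`. -/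
def IsFAPm [MeasurableSpace Ω] (P : Set Ω → ℝ) : Prop :=
  P univ = 1 ∧ (∀ A : Set Ω, MeasurableSet A → 0 ≤ P A) ∧
    ∀ A B : Set Ω, MeasurableSet A → MeasurableSet B → Disjoint A B →
      P (A ∪ B) = P A + P B

/-- The finitely additive integral of a bounded function `X` with respect to a
finitely additive probability `P`, defined via the layer-cake formula
(which agrees with the uniform-limit-of-simple-functions definition). -/
noncomputable def faIntegral (P : Set Ω → ℝ) (X : Ω → ℝ) : ℝ :=
  (∫ t in Ioi (0 : ℝ), P {ω | t < X ω}) -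
    (∫ t in Iio (0 : ℝ), (1 - P {ω | t < X ω}))

/-- `P` is absolutely continuous with respect to the (countably additive) measure `P₀`. -/
def AC [MeasurableSpace Ω] (P : Set Ω → ℝ) (P₀ : Measure Ω) : Prop :=
  ∀ A : Set Ω, MeasurableSet A → P₀ A = 0 → P A = 0

/-- `P` and `P₀` have the same null sets. -/
def EquivP [MeasurableSpace Ω] (P : Set Ω → ℝ) (P₀ : Measure Ω) : Prop :=
  ∀ A : Set Ω, MeasurableSet A → (P A = 0 ↔ P₀ A = 0)

/-- `P` is pure: the only countably additive measure `Γ` with `0 ≤ Γ ≤ P` is `Γ = 0`. -/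
def IsPure [MeasurableSpace Ω] (P : Set Ω → ℝ) : Prop :=
  ∀ Γ : Measure Ω, (∀ A : Set Ω, MeasurableSet A → Γ A ≤ ENNReal.ofReal (P A)) → Γ = 0

/-- The essential supremum `inf {a : P₀(X > a) = 0}` of a random variable `X`. -/
noncomputable def essSupR [MeasurableSpace Ω] (P₀ : Measure Ω) (X : Ω → ℝ) : ℝ :=
  sInf {a : ℝ | P₀ {ω | a < X ω} = 0}

end FAP

open FAP

theorem MeasureTheory.Lp.ae_norm_le_norm {α E : Type*} [MeasurableSpace α] {μ : Measure α}
    [NormedAddCommGroup E] (f : Lp E ⊤ μ) : ∀ᵐ x ∂μ, ‖f x‖ ≤ ‖f‖ := by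
  filter_upwards [ae_le_eLpNormEssSup (f := ⇑f) (μ := μ)] with x hx
  rw [Lp.norm_def, eLpNorm_exponent_top, ← toReal_enorm]
  exact ENNReal.toReal_mono (by simpa [eLpNorm_exponent_top] using Lp.eLpNorm_ne_top f) hx

theorem MeasureTheory.exists_pos_measure_setOf_gt_ne_zero {α : Type*} [MeasurableSpace α]
    {μ : Measure α} {f : α → ℝ} (hf : ¬ f ≤ᵐ[μ] 0) : ∃ ε > 0, μ {x | ε < f x} ≠ 0 := by
  by_contra! hzero
  refine hf ?_
  have hpos : μ {x | 0 < f x} = 0 :=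
    measure_mono_null (fun x (hx : 0 < f x) => mem_iUnion.2 (exists_nat_one_div_lt hx))
      (measure_iUnion_null fun n => hzero _ Nat.one_div_pos_of_nat)
  filter_upwards [measure_eq_zero_iff_ae_notMem.1 hpos] with x hx using not_lt.1 hx

namespace FAP

section LayerIntegral

variable {h k : ℝ → ℝ} {a b : ℝ}

noncomputable def layerIntegral (h : ℝ → ℝ) : ℝ :=
  (∫ t in Ioi (0 : ℝ), h t) - ∫ t in Iio (0 : ℝ), (1 - h t)

lemma integrableOn_Ioi_of_antitone (hh : Antitone h) (hb : ∀ t, b ≤ t → h t = 0) (x : ℝ) :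
    IntegrableOn h (Ioi x) :=
  (hh.locallyIntegrable.integrableOn_isCompact isCompact_Icc).of_forall_sdiff_eq_zero
    measurableSet_Ioi fun t ⟨hxt, hnot⟩ => hb t (not_le.1 fun htb => hnot ⟨hxt.le, htb⟩).le

lemma integrableOn_Iio_one_sub_of_antitone (hh : Antitone h) (ha : ∀ t < a, h t = 1) (x : ℝ) :
    IntegrableOn (fun t => 1 - h t) (Iio x) :=
  ((integrableOn_const (μ := volume) (s := Icc a x) (C := 1) (by simp)).sub
    (hh.locallyIntegrable.integrableOn_isCompact isCompact_Icc)).of_forall_sdiff_eq_zero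
    measurableSet_Iio fun t ⟨htx, hnot⟩ => by
      rw [Pi.sub_apply, ha t (not_le.1 fun hat => hnot ⟨hat, htx.le⟩), sub_self]

/-- Monotonicity, translation and positivity of `layerIntegral` are all read off this form. -/
lemma layerIntegral_eq_add_intervalIntegral (hh : Antitone h) (ha : ∀ t < a, h t = 1)
    (hb : ∀ t, b ≤ t → h t = 0) : layerIntegral h = a + ∫ t in a..b, h t := by
  have hright : ∫ t in Ioi b, h t = 0 :=
    setIntegral_eq_zero_of_forall_eq_zero fun t ht => hb t (le_of_lt ht)
  have hleft : ∫ t in Iio a, (1 - h t) = 0 :=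
    setIntegral_eq_zero_of_forall_eq_zero fun t ht => by rw [ha t ht, sub_self]
  have hpos := intervalIntegral.integral_Ioi_sub_Ioi' (integrableOn_Ioi_of_antitone hh hb 0)
    (integrableOn_Ioi_of_antitone hh hb b)
  have hneg := intervalIntegral.integral_Iio_sub_Iio' (integrableOn_Iio_one_sub_of_antitone hh ha 0)
    (integrableOn_Iio_one_sub_of_antitone hh ha a)
  have hsplit : (∫ t in a..0, h t) + ∫ t in (0 : ℝ)..b, h t = ∫ t in a..b, h t :=
    intervalIntegral.integral_add_adjacent_intervals hh.intervalIntegrable hh.intervalIntegrable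
  rw [intervalIntegral.integral_sub intervalIntegrable_const hh.intervalIntegrable,
    intervalIntegral.integral_const, smul_eq_mul, mul_one] at hneg
  unfold layerIntegral
  linarith

lemma layerIntegral_mono (hh : Antitone h) (hk : Antitone k) (ha : ∀ t < a, h t = 1)
    (hka : ∀ t < a, k t = 1) (hb : ∀ t, b ≤ t → h t = 0) (hkb : ∀ t, b ≤ t → k t = 0)
    (hhk : h ≤ k) : layerIntegral h ≤ layerIntegral k := by
  have hab : a ≤ b := le_of_not_gt fun hba => by simpa [hb b le_rfl] using ha b hba
  rw [layerIntegral_eq_add_intervalIntegral hh ha hb,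
    layerIntegral_eq_add_intervalIntegral hk hka hkb]
  exact add_le_add_right (intervalIntegral.integral_mono_on hab hh.intervalIntegrable
    hk.intervalIntegrable fun t _ => hhk t) a

lemma layerIntegral_comp_sub (hh : Antitone h) (ha : ∀ t < a, h t = 1)
    (hb : ∀ t, b ≤ t → h t = 0) (c : ℝ) :
    layerIntegral (fun t => h (t - c)) = layerIntegral h + c := by
  have hh' : Antitone fun t => h (t - c) := fun s t hst => hh (sub_le_sub_right hst c)
  rw [layerIntegral_eq_add_intervalIntegral hh' (a := a + c) (b := b + c)
      (fun t ht => ha _ (by linarith)) (fun t ht => hb _ (by linarith)),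
    intervalIntegral.integral_comp_sub_right, add_sub_cancel_right, add_sub_cancel_right,
    layerIntegral_eq_add_intervalIntegral hh ha hb]
  ring

lemma mul_le_layerIntegral (hh : Antitone h) (h0 : ∀ t < 0, h t = 1) (hb : ∀ t, b ≤ t → h t = 0)
    {ε : ℝ} (hε : 0 ≤ ε) : ε * h ε ≤ layerIntegral h := by
  have hnonneg : ∀ t, 0 ≤ h t := fun t =>
    (hb _ (le_max_right t b)).symm.le.trans (hh (le_max_left t b))
  rw [layerIntegral_eq_add_intervalIntegral hh h0 (b := max b ε)
    (fun t ht => hb t ((le_max_left _ _).trans ht)), zero_add]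
  calc ε * h ε = ∫ _ in (0 : ℝ)..ε, h ε := by simp
    _ ≤ ∫ t in (0 : ℝ)..ε, h t :=
      intervalIntegral.integral_mono_on hε intervalIntegrable_const hh.intervalIntegrable
        fun t ht => hh ht.2
    _ ≤ ∫ t in (0 : ℝ)..max b ε, h t :=
      intervalIntegral.integral_mono_interval le_rfl hε (le_max_right _ _)
        (Filter.Eventually.of_forall hnonneg) hh.intervalIntegrable

end LayerIntegral

section Survival

variable {Ω : Type*}

def survival (P : Set Ω → ℝ) (X : Ω → ℝ) (t : ℝ) : ℝ := P {ω | t < X ω}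

lemma faIntegral_eq_layerIntegral (P : Set Ω → ℝ) (X : Ω → ℝ) :
    faIntegral P X = layerIntegral (survival P X) := rfl

lemma survival_add_const (P : Set Ω → ℝ) (X : Ω → ℝ) (c : ℝ) :
    survival P (fun ω => X ω + c) = fun t => survival P X (t - c) := by
  funext t
  simp only [survival, sub_lt_iff_lt_add]

end Survival

section FinitelyAdditive

variable {Ω : Type*} [MeasurableSpace Ω] {P : Set Ω → ℝ} {P₀ : Measure Ω} {A B : Set Ω}

lemma EquivP.ac (h : EquivP P P₀) : AC P P₀ := fun A hA => (h A hA).2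

lemma IsFAPm.empty (hP : IsFAPm P) : P ∅ = 0 := by
  have h := hP.2.2 ∅ ∅ .empty .empty (disjoint_empty _)
  rw [union_empty] at h
  linarith

lemma IsFAPm.mono (hP : IsFAPm P) (hA : MeasurableSet A) (hB : MeasurableSet B) (hAB : A ⊆ B) :
    P A ≤ P B := by
  have h := hP.2.2 A (B \ A) hA (hB.diff hA) disjoint_sdiff_right
  rw [union_sdiff_cancel hAB] at h
  linarith [hP.2.1 (B \ A) (hB.diff hA)]

lemma IsFAPm.mono_ae (hP : IsFAPm P) (hAC : AC P P₀) (hA : MeasurableSet A)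
    (hB : MeasurableSet B) (hAB : A ≤ᵐ[P₀] B) : P A ≤ P B := by
  have hnull : P (A \ B) = 0 := hAC _ (hA.diff hB) (ae_le_set.1 hAB)
  have h := hP.2.2 (A ∩ B) (A \ B) (hA.inter hB) (hA.diff hB) disjoint_inf_sdiff
  rw [inter_union_sdiff] at h
  linarith [hP.mono (hA.inter hB) hB inter_subset_right]

variable {X Y : Ω → ℝ} {a b : ℝ}

lemma survival_antitone (hP : IsFAPm P) (hX : Measurable X) : Antitone (survival P X) :=
  fun _ _ hst => hP.mono (measurableSet_lt measurable_const hX)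
    (measurableSet_lt measurable_const hX) fun _ hω => hst.trans_lt hω

lemma survival_mono (hP : IsFAPm P) (hAC : AC P P₀) (hX : Measurable X) (hY : Measurable Y)
    (hXY : X ≤ᵐ[P₀] Y) : survival P X ≤ survival P Y := fun _ =>
  hP.mono_ae hAC (measurableSet_lt measurable_const hX) (measurableSet_lt measurable_const hY)
    (hXY.mono fun _ hω ht => lt_of_lt_of_le ht hω)

lemma survival_eq_one (hP : IsFAPm P) (hAC : AC P P₀) (hX : Measurable X)
    (hXa : ∀ᵐ ω ∂P₀, a ≤ X ω) : ∀ t < a, survival P X t = 1 := fun _ ht =>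
  le_antisymm (hP.1 ▸ hP.mono (measurableSet_lt measurable_const hX) .univ (subset_univ _))
    (hP.1 ▸ hP.mono_ae hAC .univ (measurableSet_lt measurable_const hX)
      (hXa.mono fun _ hω _ => ht.trans_le hω))

lemma survival_eq_zero (hP : IsFAPm P) (hAC : AC P P₀) (hX : Measurable X)
    (hXb : ∀ᵐ ω ∂P₀, X ω ≤ b) : ∀ t, b ≤ t → survival P X t = 0 := fun _ ht =>
  le_antisymm
    (hP.empty ▸ hP.mono_ae hAC (measurableSet_lt measurable_const hX) .empty
      (hXb.mono fun _ hω hlt => (hlt.trans_le (hω.trans ht)).false))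
    (hP.2.1 _ (measurableSet_lt measurable_const hX))

variable {C D : ℝ}

lemma faIntegral_mono (hP : IsFAPm P) (hAC : AC P P₀) (hX : Measurable X) (hY : Measurable Y)
    (hXC : ∀ᵐ ω ∂P₀, ‖X ω‖ ≤ C) (hYD : ∀ᵐ ω ∂P₀, ‖Y ω‖ ≤ D) (hXY : X ≤ᵐ[P₀] Y) :
    faIntegral P X ≤ faIntegral P Y := by
  have hXC' := hXC.mono fun _ hω => hω.trans (le_max_left C D)
  have hYD' := hYD.mono fun _ hω => hω.trans (le_max_right C D)
  exact layerIntegral_mono (survival_antitone hP hX) (survival_antitone hP hY)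
    (survival_eq_one hP hAC hX (hXC'.mono fun _ => neg_le_of_abs_le))
    (survival_eq_one hP hAC hY (hYD'.mono fun _ => neg_le_of_abs_le))
    (survival_eq_zero hP hAC hX (hXC'.mono fun _ => le_of_abs_le))
    (survival_eq_zero hP hAC hY (hYD'.mono fun _ => le_of_abs_le))
    (survival_mono hP hAC hX hY hXY)

lemma faIntegral_add_const (hP : IsFAPm P) (hAC : AC P P₀) (hX : Measurable X)
    (hXC : ∀ᵐ ω ∂P₀, ‖X ω‖ ≤ C) (c : ℝ) :
    faIntegral P (fun ω => X ω + c) = faIntegral P X + c := by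
  rw [faIntegral_eq_layerIntegral, survival_add_const]
  exact layerIntegral_comp_sub (survival_antitone hP hX)
    (survival_eq_one hP hAC hX (hXC.mono fun _ => neg_le_of_abs_le))
    (survival_eq_zero hP hAC hX (hXC.mono fun _ => le_of_abs_le)) c

lemma faIntegral_pos (hP : IsFAPm P) (heq : EquivP P P₀) (hX : Measurable X)
    (hXC : ∀ᵐ ω ∂P₀, ‖X ω‖ ≤ C) (hX0 : 0 ≤ᵐ[P₀] X) {ε : ℝ} (hε : 0 < ε)
    (hXε : P₀ {ω | ε < X ω} ≠ 0) : 0 < faIntegral P X := by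
  have hsurv : 0 < survival P X ε :=
    (hP.2.1 _ (measurableSet_lt measurable_const hX)).lt_of_ne
      fun h => hXε ((heq _ (measurableSet_lt measurable_const hX)).1 h.symm)
  exact (mul_pos hε hsurv).trans_le <| mul_le_layerIntegral (survival_antitone hP hX)
    (survival_eq_one hP heq.ac hX hX0)
    (survival_eq_zero hP heq.ac hX (hXC.mono fun _ => le_of_abs_le)) hε.le

end FinitelyAdditive

section EssentiallyBounded

variable {Ω : Type*} [MeasurableSpace Ω] {P : Set Ω → ℝ} {P₀ : Measure Ω}

lemma lipschitzWith_faIntegral (hP : IsFAPm P) (hAC : AC P P₀) :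
    LipschitzWith 1 fun f : Lp ℝ ⊤ P₀ => faIntegral P f := by
  refine LipschitzWith.of_le_add fun f g => ?_
  have hf := (Lp.stronglyMeasurable f).measurable
  have hg := (Lp.stronglyMeasurable g).measurable
  have hfg : f ≤ᵐ[P₀] fun ω => g ω + dist f g := by
    filter_upwards [Lp.ae_norm_le_norm (f - g), Lp.coeFn_sub f g] with ω hω hsub
    rw [hsub, Pi.sub_apply, Real.norm_eq_abs, ← dist_eq_norm] at hω
    linarith [le_abs_self (f ω - g ω)]
  calc faIntegral P f ≤ faIntegral P fun ω => g ω + dist f g :=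
        faIntegral_mono hP hAC hf (hg.add_const _) (Lp.ae_norm_le_norm f)
          ((Lp.ae_norm_le_norm g).mono fun _ hω => (norm_add_le _ _).trans (add_le_add_left hω _))
          hfg
    _ = faIntegral P g + dist f g := faIntegral_add_const hP hAC hg (Lp.ae_norm_le_norm g) _

lemma faIntegral_pos_of_ne_zero (hP : IsFAPm P) (heq : EquivP P P₀) {f : Lp ℝ ⊤ P₀}
    (hf0 : ∀ᵐ ω ∂P₀, 0 ≤ f ω) (hf : f ≠ 0) : 0 < faIntegral P f := by
  have hfpos : ¬ f ≤ᵐ[P₀] 0 := fun hle => hf <| (Lp.eq_zero_iff_ae_eq_zero).2 <| by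
    filter_upwards [hle, hf0] with ω h₁ h₂ using le_antisymm h₁ h₂
  obtain ⟨ε, hε, hfε⟩ := exists_pos_measure_setOf_gt_ne_zero hfpos
  exact faIntegral_pos hP heq (Lp.stronglyMeasurable f).measurable (Lp.ae_norm_le_norm f) hf0 hε hfε

end EssentiallyBounded

end FAP

theorem stmt18_general {Ω : Type*} [MeasurableSpace Ω] (P₀ : Measure Ω)
    (L : Submodule ℝ (Lp ℝ ⊤ P₀))
    (P : Set Ω → ℝ) (hP : FAP.IsFAPm P) (heq : FAP.EquivP P P₀)
    (hmart : ∀ f ∈ L, FAP.faIntegral P (f : Ω → ℝ) = 0) :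
    closure {g : Lp ℝ ⊤ P₀ | ∃ X ∈ L, ∃ Z : Lp ℝ ⊤ P₀,
        (∀ᵐ ω ∂P₀, 0 ≤ Z ω) ∧ g = X - Z} ∩
      {f : Lp ℝ ⊤ P₀ | ∀ᵐ ω ∂P₀, 0 ≤ f ω} = {0} := by
  have hcone : {g : Lp ℝ ⊤ P₀ | ∃ X ∈ L, ∃ Z : Lp ℝ ⊤ P₀, (∀ᵐ ω ∂P₀, 0 ≤ Z ω) ∧ g = X - Z} ⊆
      {g | faIntegral P g ≤ 0} := by
    rintro _ ⟨X, hX, Z, hZ, rfl⟩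
    have hle : ⇑(X - Z) ≤ᵐ[P₀] X := by
      filter_upwards [Lp.coeFn_sub X Z, hZ] with ω hsub hZω
      rw [hsub, Pi.sub_apply]
      linarith
    simpa only [mem_ofPred_eq, hmart X hX] using faIntegral_mono hP heq.ac
      (Lp.stronglyMeasurable _).measurable (Lp.stronglyMeasurable X).measurable
      (Lp.ae_norm_le_norm _) (Lp.ae_norm_le_norm X) hle
  have hclosed : IsClosed {g : Lp ℝ ⊤ P₀ | faIntegral P g ≤ 0} :=
    isClosed_le (lipschitzWith_faIntegral hP heq.ac).continuous continuous_const
  have hzero : ∀ᵐ ω ∂P₀, 0 ≤ (0 : Lp ℝ ⊤ P₀) ω :=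
    (Lp.coeFn_zero ℝ ⊤ P₀).mono fun _ hω => hω.ge
  ext f
  refine ⟨fun ⟨hf, hf0⟩ => ?_, ?_⟩
  · by_contra hne
    exact (faIntegral_pos_of_ne_zero hP heq hf0 hne).not_ge (closure_minimal hcone hclosed hf)
  · rintro rfl
    exact ⟨subset_closure ⟨0, L.zero_mem, 0, hzero, (sub_zero 0).symm⟩, hzero⟩

/-- existence of an equivalent martingale finitely additive
probability implies that the norm closure of L - L∞⁺ meets L∞⁺ only in 0. -/
theorem stmt18 {Ω : Type*} [MeasurableSpace Ω] (P₀ : Measure Ω) [IsProbabilityMeasure P₀]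
    (L : Submodule ℝ (Lp ℝ ⊤ P₀))
    (P : Set Ω → ℝ) (hP : FAP.IsFAPm P) (heq : FAP.EquivP P P₀)
    (hmart : ∀ f ∈ L, FAP.faIntegral P (f : Ω → ℝ) = 0) :
    closure {g : Lp ℝ ⊤ P₀ | ∃ X ∈ L, ∃ Z : Lp ℝ ⊤ P₀,
        (∀ᵐ ω ∂P₀, 0 ≤ Z ω) ∧ g = X - Z} ∩
      {f : Lp ℝ ⊤ P₀ | ∀ᵐ ω ∂P₀, 0 ≤ f ω} = {0} :=
  stmt18_general P₀ L P hP heq hmart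
end

section
/- Suppose $P_0$ is atomic and $L$ is a linear subspace of $L_\infty(\Omega, \mathcal{A}, P_0)$ with $\overline{L - L_\infty^+} \cap L_\infty^+ = \{0\}$ (closure in the norm topology of $L_\infty$). Then there exists a finitely additive probability $P$ with $P \sim P_0$ and $E_P(X) = 0$ for all $X \in L$. -/
open MeasureTheory Set

open FAP

/-!
For each atom `A n`, the indicator `1_{A n}` is a nonzero element of `L∞⁺`, hence it lies outside
the closed convex cone `closure (L - L∞⁺)`. Separating it from that cone yields a state `ψ n` of
`L∞` (a positive continuous linear functional with `ψ n 1 = 1`) vanishing on `L` and charging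
`A n`. The state `φ = ∑ 2⁻⁽ⁿ⁺¹⁾ ψ n` still vanishes on `L` and charges every atom, so
`P B = φ 1_B` is a finitely additive probability with the same null sets as `P₀`. Finally
`E_P f = φ f` for every `f ∈ L∞`: both sides lie between the lower and upper Riemann sums of the
antitone function `t ↦ P {f > t}` on a uniform partition, and these sums differ by at most the mesh.
-/

open Filter
open scoped ENNReal NNReal

namespace MeasureTheory.Lp
variable {α E : Type*} {m : MeasurableSpace α} {μ : Measure α} {p : ℝ≥0∞}

instance instPosSMulMono [NormedAddCommGroup E] [PartialOrder E] [NormedSpace ℝ E]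
    [PosSMulMono ℝ E] : PosSMulMono ℝ (Lp E p μ) where
  smul_le_smul_of_nonneg_left c hc f g hfg := by
    rw [← coeFn_le] at hfg ⊢
    filter_upwards [coeFn_smul c f, coeFn_smul c g, hfg] with x hf hg hx
    rw [hf, hg, Pi.smul_apply, Pi.smul_apply]
    exact smul_le_smul_of_nonneg_left hx hc

theorem ae_norm_le_norm_s19 [NormedAddCommGroup E] (f : Lp E ∞ μ) : ∀ᵐ x ∂μ, ‖f x‖ ≤ ‖f‖ := by
  rw [Lp.norm_def, toReal_eLpNorm (Lp.aestronglyMeasurable f)]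
  exact ae_le_lpNorm_exponent_top (Lp.memLp f)

theorem le_norm_smul_const_one [IsFiniteMeasure μ] (f : Lp ℝ ∞ μ) :
    f ≤ ‖f‖ • Lp.const ∞ μ (1 : ℝ) := by
  rw [← coeFn_le]
  filter_upwards [ae_norm_le_norm_s19 f, coeFn_smul ‖f‖ (Lp.const ∞ μ (1 : ℝ)),
    coeFn_const ∞ μ (1 : ℝ)] with x hx hsmul hone
  rw [hsmul, Pi.smul_apply, hone, Function.const_apply, smul_eq_mul, mul_one]
  exact (le_abs_self _).trans hx

theorem measurableSet_lt_coeFn (f : Lp ℝ p μ) (t : ℝ) : MeasurableSet {x | t < f x} :=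
  measurableSet_lt measurable_const (Lp.stronglyMeasurable f).measurable

end MeasureTheory.Lp

namespace FAP

noncomputable def node (a b : ℝ) (n k : ℕ) : ℝ := a + (b - a) / n * k

theorem integral_eq_mul_integral_node (G : ℝ → ℝ) (a b : ℝ) {n : ℕ} (hn : n ≠ 0) :
    ∫ x in a..b, G x = (b - a) / n * ∫ x in (0 : ℝ)..n, G (a + (b - a) / n * x) := by
  rw [← smul_eq_mul, intervalIntegral.smul_integral_comp_add_mul]
  congr 1 <;> field_simp <;> ring

section RiemannSums
variable {G : ℝ → ℝ} {a b : ℝ} {n : ℕ}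

theorem antitoneOn_comp_node (hG : Antitone G) (hab : a ≤ b) :
    AntitoneOn (fun x => G (a + (b - a) / n * x)) (Icc 0 (0 + n)) :=
  (hG.comp_monotone fun x y hxy => by gcongr).antitoneOn _

theorem mul_sum_node_succ_le_integral_of_antitone (hG : Antitone G) (hab : a ≤ b) (hn : n ≠ 0) :
    (b - a) / n * ∑ k ∈ Finset.range n, G (node a b n (k + 1)) ≤ ∫ x in a..b, G x := by
  rw [integral_eq_mul_integral_node G a b hn]
  gcongr ?_ * ?_
  simpa [node] using (antitoneOn_comp_node hG hab).sum_le_integral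

theorem integral_le_mul_sum_node_of_antitone (hG : Antitone G) (hab : a ≤ b) (hn : n ≠ 0) :
    ∫ x in a..b, G x ≤ (b - a) / n * ∑ k ∈ Finset.range n, G (node a b n k) := by
  rw [integral_eq_mul_integral_node G a b hn]
  gcongr ?_ * ?_
  simpa [node] using (antitoneOn_comp_node hG hab).integral_le_sum

end RiemannSums

theorem antitone_indicator_Iio_one (x : ℝ) : Antitone ((Iio x).indicator (1 : ℝ → ℝ)) := by
  intro u v huv
  by_cases hv : v ∈ Iio x
  · rw [indicator_of_mem hv, indicator_of_mem (show u ∈ Iio x from huv.trans_lt hv)]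
    rfl
  · rw [indicator_of_notMem hv]
    exact indicator_nonneg (fun _ _ => zero_le_one) u

theorem integral_indicator_Iio_one {a b x : ℝ} (hx : x ∈ Icc a b) :
    ∫ u in a..b, (Iio x).indicator (1 : ℝ → ℝ) u = x - a := by
  have hIoo : Iio x ∩ Ioc a b = Ioo a x := by
    ext u
    simp only [mem_inter_iff, mem_Iio, mem_Ioc, mem_Ioo]
    exact ⟨fun ⟨hux, hau, _⟩ => ⟨hau, hux⟩, fun ⟨hau, hux⟩ => ⟨hux, hau, hux.le.trans hx.2⟩⟩
  rw [intervalIntegral.integral_of_le (hx.1.trans hx.2), integral_indicator_one measurableSet_Iio,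
    measureReal_restrict_apply measurableSet_Iio, hIoo, Real.volume_real_Ioo_of_le hx.1]

theorem setIntegral_Ioi_sub_setIntegral_Iio_eq {F : ℝ → ℝ} {a b : ℝ} (ha : a ≤ 0) (hb : 0 ≤ b)
    (hFa : ∀ t ≤ a, F t = 1) (hFb : ∀ t, b ≤ t → F t = 0) (hF : IntervalIntegrable F volume a b) :
    (∫ t in Ioi 0, F t) - ∫ t in Iio 0, (1 - F t) = a + ∫ t in a..b, F t := by
  have hpos : ∫ t in Ioi 0, F t = ∫ t in 0..b, F t := by
    rw [intervalIntegral.integral_of_le hb]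
    refine setIntegral_eq_of_subset_of_forall_sdiff_eq_zero measurableSet_Ioi Ioc_subset_Ioi_self
      fun t ht => ?_
    simp only [Set.mem_sdiff, mem_Ioi, mem_Ioc, not_and, not_le] at ht
    exact hFb t (ht.2 ht.1).le
  have hneg : ∫ t in Iio 0, (1 - F t) = ∫ t in a..0, (1 - F t) := by
    rw [intervalIntegral.integral_of_le ha, integral_Ioc_eq_integral_Ioo]
    refine setIntegral_eq_of_subset_of_forall_sdiff_eq_zero measurableSet_Iio Ioo_subset_Iio_self
      fun t ht => ?_
    simp only [Set.mem_sdiff, mem_Iio, mem_Ioo, not_and, not_lt] at ht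
    rw [hFa t (not_lt.1 fun hat => (ht.2 hat).not_gt ht.1), sub_self]
  have h0 : (0 : ℝ) ∈ uIcc a b := mem_uIcc.2 (Or.inl ⟨ha, hb⟩)
  have hF₁ := hF.mono_set (uIcc_subset_uIcc left_mem_uIcc h0)
  have hF₂ := hF.mono_set (uIcc_subset_uIcc h0 right_mem_uIcc)
  have hsplit := intervalIntegral.integral_add_adjacent_intervals hF₁ hF₂
  rw [hpos, hneg, intervalIntegral.integral_sub intervalIntegrable_const hF₁]
  simp only [intervalIntegral.integral_const, smul_eq_mul, mul_one]
  linarith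

variable {Ω : Type*} [MeasurableSpace Ω]

section Indicator
variable (μ : Measure Ω) [IsFiniteMeasure μ] {B C : Set Ω}

noncomputable def indicatorLp (hB : MeasurableSet B) : Lp ℝ ∞ μ :=
  indicatorConstLp ∞ hB (measure_ne_top μ B) 1

noncomputable def levelSum (f : Lp ℝ ∞ μ) (s : ℕ → ℝ) (n : ℕ) : Lp ℝ ∞ μ :=
  ∑ k ∈ Finset.range n, indicatorLp μ (Lp.measurableSet_lt_coeFn f (s k))

variable {μ}

theorem coeFn_indicatorLp (hB : MeasurableSet B) :
    indicatorLp μ hB =ᵐ[μ] B.indicator (1 : Ω → ℝ) :=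
  indicatorConstLp_coeFn

theorem indicatorLp_univ : indicatorLp μ MeasurableSet.univ = Lp.const ∞ μ 1 :=
  indicatorConstLp_univ ∞ μ 1

theorem indicatorLp_empty : indicatorLp μ MeasurableSet.empty = 0 :=
  indicatorConstLp_empty

theorem indicatorLp_union (hB : MeasurableSet B) (hC : MeasurableSet C) (h : Disjoint B C) :
    indicatorLp μ (hB.union hC) = indicatorLp μ hB + indicatorLp μ hC :=
  indicatorConstLp_disjoint_union hB hC _ _ h 1

theorem indicatorLp_mono (hB : MeasurableSet B) (hC : MeasurableSet C) (h : B ≤ᵐ[μ] C) :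
    indicatorLp μ hB ≤ indicatorLp μ hC := by
  rw [← Lp.coeFn_le]
  filter_upwards [coeFn_indicatorLp hB, coeFn_indicatorLp hC, h] with x hxB hxC hx
  rw [hxB, hxC]
  by_cases hxB : x ∈ B
  · rw [indicator_of_mem hxB, indicator_of_mem (hx hxB)]
  · rw [indicator_of_notMem hxB]
    exact indicator_nonneg (fun _ _ => zero_le_one) x

theorem indicatorLp_nonneg (hB : MeasurableSet B) : 0 ≤ indicatorLp μ hB :=
  indicatorLp_empty (μ := μ) ▸ indicatorLp_mono _ hB (Eventually.of_forall fun _ => False.elim)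

theorem indicatorLp_ne_zero (hB : MeasurableSet B) (h : μ B ≠ 0) : indicatorLp μ hB ≠ 0 := by
  rwa [← indicatorLp_empty, indicatorLp, indicatorLp, Ne,
    indicatorConstLp_inj _ _ _ _ one_ne_zero, ae_eq_empty]

theorem coeFn_smul_levelSum (c : ℝ) (f : Lp ℝ ∞ μ) (s : ℕ → ℝ) (n : ℕ) :
    c • levelSum μ f s n =ᵐ[μ]
      fun x => c * ∑ k ∈ Finset.range n, (Iio (f x)).indicator (1 : ℝ → ℝ) (s k) := by
  filter_upwards [Lp.coeFn_smul c (levelSum μ f s n), Lp.coeFn_fun_finsetSum (Finset.range n)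
      fun k => indicatorLp μ (Lp.measurableSet_lt_coeFn f (s k)),
    ae_all_iff.2 fun k => coeFn_indicatorLp (μ := μ) (Lp.measurableSet_lt_coeFn f (s k))]
    with x hsmul hsum hk
  rw [hsmul, Pi.smul_apply, levelSum, hsum, smul_eq_mul]
  refine congrArg _ (Finset.sum_congr rfl fun k _ => ?_)
  rw [hk k]
  simp only [indicator_apply, mem_ofPred_eq, mem_Iio, Pi.one_apply]

theorem coeFn_sub_smul_const_one (f : Lp ℝ ∞ μ) (a : ℝ) :
    f - a • Lp.const ∞ μ (1 : ℝ) =ᵐ[μ] fun x => f x - a := by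
  filter_upwards [Lp.coeFn_sub f (a • Lp.const ∞ μ (1 : ℝ)), Lp.coeFn_smul a (Lp.const ∞ μ (1 : ℝ)),
    Lp.coeFn_const ∞ μ (1 : ℝ)] with x hsub hsmul hone
  rw [hsub, Pi.sub_apply, hsmul, Pi.smul_apply, hone, Function.const_apply, smul_eq_mul, mul_one]

end Indicator

section State
variable {P₀ : Measure Ω} [IsProbabilityMeasure P₀] {φ : StrongDual ℝ (Lp ℝ ∞ P₀)}

structure IsState (φ : StrongDual ℝ (Lp ℝ ∞ P₀)) : Prop where
  nonneg : ∀ a, 0 ≤ a → 0 ≤ φ a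
  map_one : φ (Lp.const ∞ P₀ 1) = 1

theorem apply_le_norm_mul_apply_one (hφ : ∀ a, 0 ≤ a → 0 ≤ φ a) (a : Lp ℝ ∞ P₀) :
    φ a ≤ ‖a‖ * φ (Lp.const ∞ P₀ 1) := by
  have := hφ _ (sub_nonneg.2 (Lp.le_norm_smul_const_one a))
  rwa [map_sub, map_smul, smul_eq_mul, sub_nonneg] at this

open Classical in
noncomputable def stateProb (φ : StrongDual ℝ (Lp ℝ ∞ P₀)) (B : Set Ω) : ℝ :=
  if hB : MeasurableSet B then φ (indicatorLp P₀ hB) else 0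

theorem stateProb_of_measurableSet {B : Set Ω} (hB : MeasurableSet B) :
    stateProb φ B = φ (indicatorLp P₀ hB) :=
  dif_pos hB

theorem stateProb_empty : stateProb φ ∅ = 0 := by
  rw [stateProb_of_measurableSet .empty, indicatorLp_empty, map_zero]

theorem apply_levelSum (f : Lp ℝ ∞ P₀) (s : ℕ → ℝ) (n : ℕ) :
    φ (levelSum P₀ f s n) = ∑ k ∈ Finset.range n, stateProb φ {ω | s k < f ω} := by
  simp only [levelSum, map_sum, stateProb_of_measurableSet (Lp.measurableSet_lt_coeFn f _)]

namespace IsState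
variable (hφ : IsState φ)
include hφ

theorem mono : Monotone φ := fun a b hab => by
  simpa using hφ.nonneg _ (sub_nonneg.2 hab)

theorem norm_le_one : ‖φ‖ ≤ 1 := by
  refine ContinuousLinearMap.opNorm_le_bound _ zero_le_one fun a => ?_
  have hle := apply_le_norm_mul_apply_one hφ.nonneg
  simp only [hφ.map_one, mul_one] at hle
  rw [one_mul, Real.norm_eq_abs, abs_le]
  exact ⟨neg_le.1 (by simpa using hle (-a)), by simpa using hle a⟩

theorem stateProb_univ : stateProb φ univ = 1 := by
  rw [stateProb_of_measurableSet .univ, indicatorLp_univ, hφ.map_one]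

theorem stateProb_nonneg (B : Set Ω) : 0 ≤ stateProb φ B := by
  by_cases hB : MeasurableSet B
  · rw [stateProb_of_measurableSet hB]
    exact hφ.nonneg _ (indicatorLp_nonneg hB)
  · simp [stateProb, hB]

theorem stateProb_mono_ae {B C : Set Ω} (hB : MeasurableSet B) (hC : MeasurableSet C)
    (h : B ≤ᵐ[P₀] C) : stateProb φ B ≤ stateProb φ C := by
  rw [stateProb_of_measurableSet hB, stateProb_of_measurableSet hC]
  exact hφ.mono (indicatorLp_mono hB hC h)

theorem stateProb_le_one {B : Set Ω} (hB : MeasurableSet B) : stateProb φ B ≤ 1 :=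
  hφ.stateProb_univ ▸ hφ.stateProb_mono_ae hB .univ (Eventually.of_forall fun _ _ => trivial)

theorem stateProb_of_measure_eq_zero {B : Set Ω} (hB : MeasurableSet B) (h : P₀ B = 0) :
    stateProb φ B = 0 :=
  le_antisymm (stateProb_empty (φ := φ) ▸
    hφ.stateProb_mono_ae hB .empty (ae_le_set.2 (by rwa [sdiff_empty]))) (hφ.stateProb_nonneg B)

theorem stateProb_of_ae_mem {B : Set Ω} (hB : MeasurableSet B) (h : ∀ᵐ ω ∂P₀, ω ∈ B) :
    stateProb φ B = 1 :=
  le_antisymm (hφ.stateProb_le_one hB)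
    (hφ.stateProb_univ ▸ hφ.stateProb_mono_ae .univ hB (h.mono fun _ hω _ => hω))

theorem isFAPm : IsFAPm (stateProb φ) := by
  refine ⟨hφ.stateProb_univ, fun B _ => hφ.stateProb_nonneg B, fun B C hB hC hBC => ?_⟩
  rw [stateProb_of_measurableSet (hB.union hC), stateProb_of_measurableSet hB,
    stateProb_of_measurableSet hC, indicatorLp_union hB hC hBC, map_add]

theorem antitone_stateProb_lt (f : Lp ℝ ∞ P₀) : Antitone fun t => stateProb φ {ω | t < f ω} :=
  fun s t hst => hφ.stateProb_mono_ae (Lp.measurableSet_lt_coeFn f t)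
    (Lp.measurableSet_lt_coeFn f s) (Eventually.of_forall fun _ h => hst.trans_lt h)

end IsState

end State

section LayerCake
variable {P₀ : Measure Ω} [IsProbabilityMeasure P₀] {a b : ℝ} {n : ℕ}

theorem smul_levelSum_node_succ_le (f : Lp ℝ ∞ P₀) (hab : a ≤ b)
    (hf : ∀ᵐ ω ∂P₀, f ω ∈ Icc a b) (hn : n ≠ 0) :
    ((b - a) / n) • levelSum P₀ f (fun k => node a b n (k + 1)) n ≤ f - a • Lp.const ∞ P₀ 1 := by
  rw [← Lp.coeFn_le]
  filter_upwards [coeFn_smul_levelSum ((b - a) / n) f (fun k => node a b n (k + 1)) n,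
    coeFn_sub_smul_const_one f a, hf] with ω hsum hsub hω
  rw [hsum, hsub, ← integral_indicator_Iio_one hω]
  exact mul_sum_node_succ_le_integral_of_antitone (antitone_indicator_Iio_one _) hab hn

theorem le_smul_levelSum_node (f : Lp ℝ ∞ P₀) (hab : a ≤ b)
    (hf : ∀ᵐ ω ∂P₀, f ω ∈ Icc a b) (hn : n ≠ 0) :
    f - a • Lp.const ∞ P₀ 1 ≤ ((b - a) / n) • levelSum P₀ f (node a b n) n := by
  rw [← Lp.coeFn_le]
  filter_upwards [coeFn_sub_smul_const_one f a, coeFn_smul_levelSum ((b - a) / n) f (node a b n) n,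
    hf] with ω hsub hsum hω
  rw [hsum, hsub, ← integral_indicator_Iio_one hω]
  exact integral_le_mul_sum_node_of_antitone (antitone_indicator_Iio_one _) hab hn

theorem IsState.apply_eq_add_integral {φ : StrongDual ℝ (Lp ℝ ∞ P₀)} (hφ : IsState φ)
    (f : Lp ℝ ∞ P₀) (hab : a ≤ b) (hf : ∀ᵐ ω ∂P₀, f ω ∈ Icc a b) :
    φ f = a + ∫ t in a..b, stateProb φ {ω | t < f ω} := by
  set F := fun t => stateProb φ {ω | t < f ω}
  have hF : Antitone F := hφ.antitone_stateProb_lt f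
  have hφf : φ (f - a • Lp.const ∞ P₀ 1) = φ f - a := by
    rw [map_sub, map_smul, hφ.map_one, smul_eq_mul, mul_one]
  suffices h : ∀ n : ℕ, n ≠ 0 → |φ f - a - ∫ t in a..b, F t| ≤ (b - a) / n by
    have := ge_of_tendsto (tendsto_const_div_atTop_nhds_zero_nat (b - a))
      (eventually_atTop.2 ⟨1, fun n hn => h n (by omega)⟩)
    rw [abs_nonpos_iff, sub_sub, sub_eq_zero] at this
    exact this
  intro n hn
  -- `φ f - a` and `∫ F` both lie between the lower and the upper Riemann sum of `F`.
  have hlo := hφ.mono (smul_levelSum_node_succ_le f hab hf hn)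
  have hhi := hφ.mono (le_smul_levelSum_node f hab hf hn)
  rw [map_smul, apply_levelSum, hφf, smul_eq_mul] at hlo hhi
  have hint_lo := mul_sum_node_succ_le_integral_of_antitone hF hab hn
  have hint_hi := integral_le_mul_sum_node_of_antitone hF hab hn
  have htel : ∑ k ∈ Finset.range n, F (node a b n k) - ∑ k ∈ Finset.range n, F (node a b n (k + 1))
      ≤ 1 := by
    rw [← Finset.sum_sub_distrib, Finset.sum_range_sub']
    linarith [hφ.stateProb_le_one (Lp.measurableSet_lt_coeFn f (node a b n 0)),
      hφ.stateProb_nonneg {ω | node a b n n < f ω}]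
  have hδ : 0 ≤ (b - a) / n := div_nonneg (by linarith) n.cast_nonneg
  rw [abs_le]
  constructor <;> nlinarith

theorem IsState.faIntegral_stateProb {φ : StrongDual ℝ (Lp ℝ ∞ P₀)} (hφ : IsState φ)
    (f : Lp ℝ ∞ P₀) : faIntegral (stateProb φ) f = φ f := by
  have hf := Lp.ae_norm_le_norm_s19 f
  have hf₀ := norm_nonneg f
  rw [hφ.apply_eq_add_integral f (a := -‖f‖ - 1) (b := ‖f‖) (by linarith) (hf.mono fun ω h => by
    rw [Real.norm_eq_abs, abs_le] at h; exact ⟨by linarith, h.2⟩)]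
  refine setIntegral_Ioi_sub_setIntegral_Iio_eq (by linarith) hf₀ (fun t ht => ?_) (fun t ht => ?_)
    (hφ.antitone_stateProb_lt f).intervalIntegrable
  · refine hφ.stateProb_of_ae_mem (Lp.measurableSet_lt_coeFn f t) (hf.mono fun ω h => ?_)
    rw [Real.norm_eq_abs, abs_le] at h
    show t < f ω
    linarith
  · refine hφ.stateProb_of_measure_eq_zero (Lp.measurableSet_lt_coeFn f t)
      (measure_eq_zero_iff_ae_notMem.2 (hf.mono fun ω h => ?_))
    rw [Real.norm_eq_abs, abs_le] at h
    exact not_lt.2 (h.2.trans ht)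

end LayerCake

section Existence
variable {P₀ : Measure Ω} [IsProbabilityMeasure P₀]

theorem exists_isState_pos_of_notMem_closure (L : Submodule ℝ (Lp ℝ ∞ P₀)) {x : Lp ℝ ∞ P₀}
    (hx : x ∉ closure {g | ∃ X ∈ L, ∃ Z, 0 ≤ Z ∧ g = X - Z}) :
    ∃ ψ : StrongDual ℝ (Lp ℝ ∞ P₀), IsState ψ ∧ (∀ X ∈ L, ψ X = 0) ∧ 0 < ψ x := by
  let K := L.restrictScalars ℝ≥0 ⊔ PointedCone.positive ℝ (Lp ℝ ∞ P₀)
  have hK : ∀ y ∈ K, y ∈ K.closure := fun y hy => subset_closure hy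
  have hC : -x ∉ K.closure := fun h => hx <| by
    rw [← neg_neg x]
    refine map_mem_closure continuous_neg h fun y hy => ?_
    obtain ⟨X, hX, Z, hZ, rfl⟩ := Submodule.mem_sup.1 hy
    exact ⟨-X, L.neg_mem hX, Z, hZ, by abel⟩
  obtain ⟨ℓ, hℓK, hℓx⟩ := ProperCone.hyperplane_separation_point K.closure hC
  have hℓpos : ∀ a, 0 ≤ a → 0 ≤ ℓ a := fun a ha => hℓK a (hK a (Submodule.mem_sup_right ha))
  have hℓL : ∀ X ∈ L, ℓ X = 0 := fun X hX =>
    le_antisymm (by simpa using hℓK (-X) (hK _ (Submodule.mem_sup_left (L.neg_mem hX))))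
      (hℓK X (hK X (Submodule.mem_sup_left hX)))
  have hℓx' : 0 < ℓ x := by simpa using hℓx
  have hℓ1 : 0 < ℓ (Lp.const ∞ P₀ 1) :=
    pos_of_mul_pos_right (hℓx'.trans_le (apply_le_norm_mul_apply_one hℓpos x)) (norm_nonneg x)
  refine ⟨(ℓ (Lp.const ∞ P₀ 1))⁻¹ • ℓ, ⟨fun a ha => ?_, ?_⟩, fun X hX => ?_, ?_⟩
  · exact mul_nonneg (inv_nonneg.2 hℓ1.le) (hℓpos a ha)
  · exact inv_mul_cancel₀ hℓ1.ne'
  · simp [hℓL X hX]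
  · exact mul_pos (inv_pos.2 hℓ1) hℓx'

theorem exists_isState_pos_of_forall_isState {ψ : ℕ → StrongDual ℝ (Lp ℝ ∞ P₀)}
    (hψ : ∀ n, IsState (ψ n)) :
    ∃ φ : StrongDual ℝ (Lp ℝ ∞ P₀), IsState φ ∧ (∀ a, (∀ n, ψ n a = 0) → φ a = 0) ∧
      ∀ n a, 0 ≤ a → 0 < ψ n a → 0 < φ a := by
  have hsum : Summable fun n => (1 / 2 / 2 ^ n : ℝ) • ψ n :=
    Summable.of_norm_bounded (summable_geometric_two' 1) fun n => by
      rw [norm_smul, Real.norm_of_nonneg (by positivity)]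
      exact mul_le_of_le_one_right (by positivity) (hψ n).norm_le_one
  have happly : ∀ a, (∑' n, (1 / 2 / 2 ^ n : ℝ) • ψ n) a = ∑' n, 1 / 2 / 2 ^ n * ψ n a :=
    fun a => by simpa using (ContinuousLinearMap.apply ℝ ℝ a).map_tsum hsum
  have hsum' : ∀ a, Summable fun n => 1 / 2 / 2 ^ n * ψ n a :=
    fun a => by simpa using hsum.mapL (ContinuousLinearMap.apply ℝ ℝ a)
  refine ⟨∑' n, (1 / 2 / 2 ^ n : ℝ) • ψ n, ⟨fun a ha => ?_, ?_⟩, fun a ha => ?_,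
    fun n a ha hn => ?_⟩
  · rw [happly]
    exact tsum_nonneg fun n => mul_nonneg (by positivity) ((hψ n).nonneg a ha)
  · simp_rw [happly, (hψ _).map_one, mul_one]
    exact tsum_geometric_two' 1
  · rw [happly]
    simp [ha]
  · rw [happly]
    exact (mul_pos (by positivity) hn).trans_le ((hsum' a).le_tsum n fun m _ =>
      mul_nonneg (by positivity) ((hψ m).nonneg a ha))

end Existence

theorem exists_ae_le_of_measure_ne_zero {μ : Measure Ω} [IsFiniteMeasure μ] {A : ℕ → Set Ω}
    (hcover : ⋃ n, A n = univ)
    (hatom : ∀ n, ∀ B, MeasurableSet B → μ (B ∩ A n) = 0 ∨ μ (B ∩ A n) = μ (A n))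
    {B : Set Ω} (hB : MeasurableSet B) (h : μ B ≠ 0) : ∃ n, A n ≤ᵐ[μ] B := by
  obtain ⟨n, hn⟩ : ∃ n, μ (B ∩ A n) ≠ 0 := by
    by_contra! hall
    exact h (by rw [← inter_univ B, ← hcover, inter_iUnion]; exact measure_iUnion_null hall)
  refine ⟨n, ae_le_set.2 ?_⟩
  have := measure_inter_add_sdiff (μ := μ) (A n) hB
  rw [inter_comm, (hatom n B hB).resolve_left hn] at this
  exact (ENNReal.add_right_inj (measure_ne_top μ _)).1 (this.trans (add_zero _).symm)

end FAP

theorem stmt19_general {Ω : Type*} [MeasurableSpace Ω] (P₀ : Measure Ω) [IsProbabilityMeasure P₀]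
    (A : ℕ → Set Ω) (hAm : ∀ n, MeasurableSet (A n))
    (hAcover : (⋃ n, A n) = univ)
    (hatom : ∀ n, 0 < P₀ (A n) ∧
      ∀ B : Set Ω, MeasurableSet B → P₀ (B ∩ A n) = 0 ∨ P₀ (B ∩ A n) = P₀ (A n))
    (L : Submodule ℝ (Lp ℝ ⊤ P₀))
    (hclos : closure {g : Lp ℝ ⊤ P₀ | ∃ X ∈ L, ∃ Z : Lp ℝ ⊤ P₀,
        (∀ᵐ ω ∂P₀, 0 ≤ Z ω) ∧ g = X - Z} ∩
      {f : Lp ℝ ⊤ P₀ | ∀ᵐ ω ∂P₀, 0 ≤ f ω} = {0}) :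
    ∃ P : Set Ω → ℝ, FAP.IsFAPm P ∧ FAP.EquivP P P₀ ∧
      ∀ f ∈ L, FAP.faIntegral P (f : Ω → ℝ) = 0 := by
  have hnonneg : ∀ f : Lp ℝ ⊤ P₀, (∀ᵐ ω ∂P₀, 0 ≤ f ω) ↔ 0 ≤ f := Lp.coeFn_nonneg
  simp only [hnonneg] at hclos
  have hsep : ∀ n, ∃ ψ : StrongDual ℝ (Lp ℝ ⊤ P₀), IsState ψ ∧ (∀ X ∈ L, ψ X = 0) ∧
      0 < ψ (indicatorLp P₀ (hAm n)) := fun n =>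
    exists_isState_pos_of_notMem_closure L fun h => indicatorLp_ne_zero (hAm n) (hatom n).1.ne'
      (hclos.subset ⟨h, indicatorLp_nonneg (hAm n)⟩)
  choose ψ hψ hψL hψA using hsep
  obtain ⟨φ, hφ, hφL, hφpos⟩ := exists_isState_pos_of_forall_isState hψ
  refine ⟨stateProb φ, hφ.isFAPm, fun B hB => ⟨fun hPB => ?_, hφ.stateProb_of_measure_eq_zero hB⟩,
    fun f hf => by rw [hφ.faIntegral_stateProb, hφL f fun n => hψL n f hf]⟩
  by_contra hB₀
  obtain ⟨n, hn⟩ := exists_ae_le_of_measure_ne_zero hAcover (fun n => (hatom n).2) hB hB₀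
  have := hφ.stateProb_mono_ae (hAm n) hB hn
  rw [hPB, stateProb_of_measurableSet (hAm n)] at this
  exact this.not_gt (hφpos n _ (indicatorLp_nonneg _) (hψA n))

/-- if P₀ is atomic and the norm closure of L - L∞⁺ meets L∞⁺ only
in 0, then an equivalent martingale finitely additive probability exists. -/
theorem stmt19 {Ω : Type*} [MeasurableSpace Ω] (P₀ : Measure Ω) [IsProbabilityMeasure P₀]
    (A : ℕ → Set Ω) (hAm : ∀ n, MeasurableSet (A n))
    (hAdisj : Pairwise (Function.onFun Disjoint A)) (hAcover : (⋃ n, A n) = univ)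
    (hatom : ∀ n, 0 < P₀ (A n) ∧
      ∀ B : Set Ω, MeasurableSet B → P₀ (B ∩ A n) = 0 ∨ P₀ (B ∩ A n) = P₀ (A n))
    (L : Submodule ℝ (Lp ℝ ⊤ P₀))
    (hclos : closure {g : Lp ℝ ⊤ P₀ | ∃ X ∈ L, ∃ Z : Lp ℝ ⊤ P₀,
        (∀ᵐ ω ∂P₀, 0 ≤ Z ω) ∧ g = X - Z} ∩
      {f : Lp ℝ ⊤ P₀ | ∀ᵐ ω ∂P₀, 0 ≤ f ω} = {0}) :
    ∃ P : Set Ω → ℝ, FAP.IsFAPm P ∧ FAP.EquivP P P₀ ∧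
      ∀ f ∈ L, FAP.faIntegral P (f : Ω → ℝ) = 0 :=
  stmt19_general P₀ A hAm hAcover hatom L hclos
end
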